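/- Let Ω ⊆ ℝ^N be a bounded open set and Φ : Ω × ℝ → ℝ be such that Φ(x, ·) is non-decreasing for each x ∈ Ω. Let w̲, w̄ be functions on ℝ^N, continuous on the closure of Ω and twice differentiable in Ω, with w̲ ≤ w̄ on ℝ^N \ Ω (including ∂Ω). Assume the strict inequality -Δw̲(x) + Φ(x, L w̲(x)) < -Δw̄(x) + Φ(x, L w̄(x)) holds for every x ∈ Ω, where L denotes the fractional Laplacian (-Δ)^σ defined pointwise as a principal value integral, assumed well-defined on w̲ and w̄ at every point of Ω. Then w̲ ≤ w̄ in Ω. -/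

import Mathlib

open Real MeasureTheory Metric Set Filter Bornology
open scoped Topology

/-- The classical Laplacian on `ℝ^N`, as the sum of the pure second derivatives. -/
noncomputable def lap {n : ℕ} (u : EuclideanSpace ℝ (Fin n) → ℝ)
    (x : EuclideanSpace ℝ (Fin n)) : ℝ :=
  ∑ i : Fin n, iteratedFDeriv ℝ 2 u x ![EuclideanSpace.single i 1, EuclideanSpace.single i 1]

/-- `L` is the value of the fractional Laplacian `(-Δ)^σ w (x)`, defined as the
principal value integral `c P.V.∫ (w(x)-w(y))/|x-y|^{N+2σ} dy`, assumed well-defined: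
all truncated integrals exist and converge as the truncation parameter `ε ↓ 0`. -/
def IsFracLap (n : ℕ) (c σ : ℝ) (w : EuclideanSpace ℝ (Fin n) → ℝ)
    (x : EuclideanSpace ℝ (Fin n)) (L : ℝ) : Prop :=
  (∀ ε > (0:ℝ), IntegrableOn
      (fun y => (w x - w y) / dist x y ^ ((n : ℝ) + 2 * σ)) {y | ε ≤ dist x y}) ∧
  Filter.Tendsto
    (fun ε : ℝ => c * ∫ y in {y | ε ≤ dist x y},
        (w x - w y) / dist x y ^ ((n : ℝ) + 2 * σ))
    (nhdsWithin 0 (Set.Ioi 0)) (nhds L)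

/-! If `w̲ - w̄` were positive somewhere, it would attain a positive global maximum at an interior
point `z`, since it is `≤ 0` off `Ω`. There `Δ(w̲ - w̄)(z) ≤ 0` by the second derivative test along
each coordinate line, and `(-Δ)^σ(w̲ - w̄)(z) ≥ 0` because every truncated integrand is
nonnegative. Monotonicity of `Φ(z, ·)` then contradicts the strict inequality at `z`. -/

theorem IsLocalMax.deriv_deriv_nonpos {f : ℝ → ℝ} {a : ℝ} (h : IsLocalMax f a)
    (hc : ContinuousAt f a) : deriv (deriv f) a ≤ 0 := by
  by_contra! hpos
  have hmin : IsLocalMin f a := isLocalMin_of_deriv_deriv_pos hpos h.deriv_eq_zero hc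
  -- being both a local maximum and a local minimum, `a` has a neighbourhood where `f` is constant
  have hconst : deriv f =ᶠ[𝓝 a] fun _ => 0 := by
    filter_upwards [(h.and hmin).eventually_nhds] with x hx
    have hfx : f =ᶠ[𝓝 x] fun _ => f a := hx.mono fun y hy => le_antisymm hy.1 hy.2
    exact hfx.deriv_eq.trans (deriv_const x (f a))
  simp [hconst.deriv_eq] at hpos

theorem deriv_deriv_comp_add_smul {E : Type*} [NormedAddCommGroup E] [NormedSpace ℝ E]
    {f : E → ℝ} {z : E} (hf : ContDiffAt ℝ 2 f z) (v : E) :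
    deriv (deriv fun t : ℝ => f (z + t • v)) 0 = iteratedFDeriv ℝ 2 f z ![v, v] := by
  have hline : ∀ t : ℝ, HasDerivAt (fun t : ℝ => z + t • v) v t := fun t => by
    simpa using ((hasDerivAt_id t).smul_const v).const_add z
  have hline0 : Tendsto (fun t : ℝ => z + t • v) (𝓝 0) (𝓝 z) := by
    simpa using ((hline 0).continuousAt.tendsto)
  have hderiv : deriv (fun t : ℝ => f (z + t • v)) =ᶠ[𝓝 0] fun t => fderiv ℝ f (z + t • v) v := by
    filter_upwards [hline0.eventually (hf.eventually (by simp))] with t ht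
    exact ((ht.differentiableAt two_ne_zero).hasFDerivAt.comp_hasDerivAt t (hline t)).deriv
  have hf' : HasFDerivAt (fderiv ℝ f) (fderiv ℝ (fderiv ℝ f) z) z :=
    ((hf.fderiv_right (m := 1) le_rfl).differentiableAt one_ne_zero).hasFDerivAt
  have hsecond : HasDerivAt (fun t : ℝ => fderiv ℝ f (z + t • v) v)
      (fderiv ℝ (fderiv ℝ f) z v v) 0 :=
    ((ContinuousLinearMap.apply ℝ ℝ v).hasFDerivAt.comp z hf').comp_hasDerivAt_of_eq
      0 (hline 0) (by simp)
  rw [hderiv.deriv_eq, hsecond.deriv, iteratedFDeriv_two_apply]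
  rfl

theorem IsLocalMax.iteratedFDeriv_two_nonpos {E : Type*} [NormedAddCommGroup E]
    [NormedSpace ℝ E] {f : E → ℝ} {z : E} (h : IsLocalMax f z) (hf : ContDiffAt ℝ 2 f z)
    (v : E) : iteratedFDeriv ℝ 2 f z ![v, v] ≤ 0 := by
  have hline : Continuous fun t : ℝ => z + t • v := by fun_prop
  rw [← deriv_deriv_comp_add_smul hf v]
  refine IsLocalMax.deriv_deriv_nonpos ?_ ?_
  · exact IsLocalMax.comp_continuous (g := fun t : ℝ => z + t • v) (b := 0) (by simpa using h)
      hline.continuousAt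
  · exact hf.continuousAt.comp_of_eq hline.continuousAt (by simp)

section Laplacian

variable {n : ℕ} {u v : EuclideanSpace ℝ (Fin n) → ℝ} {z : EuclideanSpace ℝ (Fin n)}

theorem lap_sub (hu : ContDiffAt ℝ 2 u z) (hv : ContDiffAt ℝ 2 v z) :
    lap (u - v) z = lap u z - lap v z := by
  simp only [lap, iteratedFDeriv_sub_apply hu hv, sub_apply, Finset.sum_sub_distrib]

theorem IsLocalMax.lap_nonpos (h : IsLocalMax u z) (hu : ContDiffAt ℝ 2 u z) : lap u z ≤ 0 :=
  Finset.sum_nonpos fun _ _ => h.iteratedFDeriv_two_nonpos hu _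

end Laplacian

namespace IsFracLap

variable {n : ℕ} {c σ : ℝ} {u v : EuclideanSpace ℝ (Fin n) → ℝ} {x : EuclideanSpace ℝ (Fin n)}
  {L M : ℝ}

theorem sub (hu : IsFracLap n c σ u x L) (hv : IsFracLap n c σ v x M) :
    IsFracLap n c σ (u - v) x (L - M) := by
  have hkernel : ∀ y, ((u - v) x - (u - v) y) / dist x y ^ ((n : ℝ) + 2 * σ) =
      (u x - u y) / dist x y ^ ((n : ℝ) + 2 * σ) - (v x - v y) / dist x y ^ ((n : ℝ) + 2 * σ) :=
    fun y => by simp only [Pi.sub_apply]; ring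
  simp only [IsFracLap, hkernel]
  refine ⟨fun ε hε => (hu.1 ε hε).sub (hv.1 ε hε), ?_⟩
  refine (hu.2.sub hv.2).congr' ?_
  filter_upwards [self_mem_nhdsWithin] with ε hε
  rw [← mul_sub, integral_sub (hu.1 ε hε) (hv.1 ε hε)]

theorem nonneg_of_forall_le (hc : 0 ≤ c) (hu : IsFracLap n c σ u x L) (hmax : ∀ y, u y ≤ u x) :
    0 ≤ L :=
  ge_of_tendsto' hu.2 fun _ => mul_nonneg hc <| integral_nonneg fun y =>
    div_nonneg (sub_nonneg.2 (hmax y)) (rpow_nonneg dist_nonneg _)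

end IsFracLap

theorem Bornology.IsBounded.exists_mem_forall_le_of_nonpos_compl {E : Type*}
    [PseudoMetricSpace E] [ProperSpace E] {Ω : Set E} {w : E → ℝ} (hΩ : IsBounded Ω)
    (hw : ContinuousOn w (closure Ω)) (hout : ∀ x ∉ Ω, w x ≤ 0) (hpos : ∃ x, 0 < w x) :
    ∃ z ∈ Ω, ∀ y, w y ≤ w z := by
  obtain ⟨x, hx⟩ := hpos
  have hxΩ : x ∈ Ω := by_contra fun hxΩ => (hout x hxΩ).not_gt hx
  obtain ⟨z, hzΩ, hz⟩ := hΩ.isCompact_closure.exists_isMaxOn ⟨x, subset_closure hxΩ⟩ hw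
  have hmax : ∀ y, w y ≤ w z := fun y => by
    by_cases hy : y ∈ closure Ω
    · exact hz hy
    · exact (hout y fun h => hy (subset_closure h)).trans (hx.le.trans (hz (subset_closure hxΩ)))
  exact ⟨z, by_contra fun hzΩ => (hout z hzΩ).not_gt (hx.trans_le (hmax x)), hmax⟩

theorem stmt4_general {n : ℕ} (Ω : Set (EuclideanSpace ℝ (Fin n)))
    (hΩo : IsOpen Ω) (hΩb : IsBounded Ω)
    (Φ : EuclideanSpace ℝ (Fin n) → ℝ → ℝ) (hΦ : ∀ x ∈ Ω, Monotone (Φ x))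
    (c σ : ℝ) (hc : 0 < c)
    (wl wu : EuclideanSpace ℝ (Fin n) → ℝ) (Ll Lu : EuclideanSpace ℝ (Fin n) → ℝ)
    (hwlc : ContinuousOn wl (closure Ω)) (hwuc : ContinuousOn wu (closure Ω))
    (hwl2 : ContDiffOn ℝ 2 wl Ω) (hwu2 : ContDiffOn ℝ 2 wu Ω)
    (hLl : ∀ x ∈ Ω, IsFracLap n c σ wl x (Ll x))
    (hLu : ∀ x ∈ Ω, IsFracLap n c σ wu x (Lu x))
    (hout : ∀ x, x ∉ Ω → wl x ≤ wu x)
    (hstrict : ∀ x ∈ Ω, -lap wl x + Φ x (Ll x) < -lap wu x + Φ x (Lu x)) :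
    ∀ x ∈ Ω, wl x ≤ wu x := by
  by_contra! hcon
  obtain ⟨x, -, hx⟩ := hcon
  obtain ⟨z, hzΩ, hmax⟩ := hΩb.exists_mem_forall_le_of_nonpos_compl (w := wl - wu)
    (hwlc.sub hwuc) (fun y hy => sub_nonpos.2 (hout y hy)) ⟨x, sub_pos.2 hx⟩
  have hwlz := hwl2.contDiffAt (hΩo.mem_nhds hzΩ)
  have hwuz := hwu2.contDiffAt (hΩo.mem_nhds hzΩ)
  have hlap : lap wl z ≤ lap wu z := by
    have hdiff := IsLocalMax.lap_nonpos (Filter.Eventually.of_forall hmax) (hwlz.sub hwuz)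
    rwa [lap_sub hwlz hwuz, sub_nonpos] at hdiff
  have hfrac : Lu z ≤ Ll z :=
    sub_nonneg.1 (((hLl z hzΩ).sub (hLu z hzΩ)).nonneg_of_forall_le hc.le hmax)
  linarith [hΦ z hzΩ hfrac, hstrict z hzΩ]

/-- Weak comparison principle under a strict inequality: if `Φ(x,·)` is
non-decreasing, `w̲ ≤ w̄` outside `Ω` (including `∂Ω`), and
`-Δw̲ + Φ(·, (-Δ)^σ w̲) < -Δw̄ + Φ(·, (-Δ)^σ w̄)` pointwise in `Ω`, then `w̲ ≤ w̄` in `Ω`. -/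
theorem stmt4 {n : ℕ} (hn : 0 < n) (Ω : Set (EuclideanSpace ℝ (Fin n)))
    (hΩo : IsOpen Ω) (hΩb : IsBounded Ω)
    (Φ : EuclideanSpace ℝ (Fin n) → ℝ → ℝ) (hΦ : ∀ x ∈ Ω, Monotone (Φ x))
    (c σ : ℝ) (hc : 0 < c) (hσ : σ ∈ Ioo (0:ℝ) 1)
    (wl wu : EuclideanSpace ℝ (Fin n) → ℝ) (Ll Lu : EuclideanSpace ℝ (Fin n) → ℝ)
    (hwlc : ContinuousOn wl (closure Ω)) (hwuc : ContinuousOn wu (closure Ω))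
    (hwl2 : ContDiffOn ℝ 2 wl Ω) (hwu2 : ContDiffOn ℝ 2 wu Ω)
    (hLl : ∀ x ∈ Ω, IsFracLap n c σ wl x (Ll x))
    (hLu : ∀ x ∈ Ω, IsFracLap n c σ wu x (Lu x))
    (hout : ∀ x, x ∉ Ω → wl x ≤ wu x)
    (hstrict : ∀ x ∈ Ω, -lap wl x + Φ x (Ll x) < -lap wu x + Φ x (Lu x)) :
    ∀ x ∈ Ω, wl x ≤ wu x :=
  stmt4_general Ω hΩo hΩb Φ hΦ c σ hc wl wu Ll Lu hwlc hwuc hwl2 hwu2 hLl hLu hout hstrict
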